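/- Let f : ℝ^d → ℝ be three times continuously differentiable with L-Lipschitz Hessian, i.e., ‖∇²f(x+u) − ∇²f(x)‖ ≤ L‖u‖ for all x, u. Let P ∈ ℝ^{d×q} satisfy PᵀP = I_q, let z ∼ N(0, I_q), and define g_ε = ((f(x + εPz) − f(x − εPz))/(2ε)) Pz. Then there exists a bias vector b_ε such that E[g_ε] = PPᵀ∇f(x) + b_ε with ‖b_ε‖ ≤ (L/6) ε² E‖Pz‖⁴ ≤ (L/6) ε² (q+4)². In particular, ‖E[g_ε] − PPᵀ∇f(x)‖ ≤ (L/6) ε² (q+4)². -/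

import Mathlib

open MeasureTheory ProbabilityTheory Matrix
open scoped InnerProductSpace
open Filter Real Set
open scoped NNReal ENNReal RealInnerProductSpace

set_option maxHeartbeats 1000000

/-- The standard Gaussian measure `N(0, I_n)` on `ℝ^n` (with the Euclidean norm). -/
noncomputable def stdGaussian (n : ℕ) : Measure (EuclideanSpace ℝ (Fin n)) :=
  (Measure.pi fun _ : Fin n => gaussianReal 0 1).map
    (MeasurableEquiv.toLp 2 (Fin n → ℝ))


lemma aux_bound (m : ℕ) (x : ℝ) :
    |x ^ m * Real.exp (-x ^ 2 / 2)| ≤ m.factorial * Real.exp 1 * Real.exp (-(1/4) * x ^ 2) := by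
  have h1 : |x| ^ m ≤ m.factorial * Real.exp |x| := by
    have h2 : |x| ^ m / m.factorial ≤ Real.exp |x| := by
      calc |x| ^ m / m.factorial ≤ ∑ i ∈ Finset.range (m+1), |x| ^ i / i.factorial := by
            refine Finset.single_le_sum (f := fun i => |x| ^ i / i.factorial) ?_ ?_
            · intro i _; positivity
            · exact Finset.self_mem_range_succ m
        _ ≤ Real.exp |x| := Real.sum_le_exp_of_nonneg (abs_nonneg x) (m+1)
    have : (0:ℝ) < m.factorial := by positivity
    calc |x| ^ m = m.factorial * (|x| ^ m / m.factorial) := by field_simp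
      _ ≤ m.factorial * Real.exp |x| := by
          exact mul_le_mul_of_nonneg_left h2 (le_of_lt this)
  have h3 : Real.exp |x| * Real.exp (-x ^ 2 / 2) ≤ Real.exp 1 * Real.exp (-(1/4) * x^2) := by
    rw [← Real.exp_add, ← Real.exp_add]
    apply Real.exp_le_exp.mpr
    nlinarith [sq_nonneg (|x| - 2), sq_abs x]
  calc |x ^ m * Real.exp (-x ^ 2 / 2)| = |x| ^ m * Real.exp (-x ^ 2 / 2) := by
        rw [abs_mul, abs_pow, abs_of_pos (Real.exp_pos _)]
    _ ≤ (m.factorial * Real.exp |x|) * Real.exp (-x ^ 2 / 2) :=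
        mul_le_mul_of_nonneg_right h1 (le_of_lt (Real.exp_pos _))
    _ = m.factorial * (Real.exp |x| * Real.exp (-x ^ 2 / 2)) := by ring
    _ ≤ m.factorial * (Real.exp 1 * Real.exp (-(1/4) * x^2)) := by
        exact mul_le_mul_of_nonneg_left h3 (by positivity)
    _ = m.factorial * Real.exp 1 * Real.exp (-(1/4) * x ^ 2) := by ring

lemma integrable_pow_gauss (m : ℕ) :
    Integrable (fun x : ℝ => x ^ m * Real.exp (-x ^ 2 / 2)) := by
  apply Integrable.mono' ((integrable_exp_neg_mul_sq (by norm_num : (0:ℝ) < 1/4)).const_mul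
    (m.factorial * Real.exp 1))
  · exact ((continuous_pow m).mul (by continuity)).aestronglyMeasurable
  · exact ae_of_all _ fun x => by
      simp only [norm_eq_abs]; exact aux_bound m x

lemma tendsto_sq_bound : Tendsto (fun x : ℝ => Real.exp (-(1/4) * x ^ 2)) atTop (nhds 0) ∧
    Tendsto (fun x : ℝ => Real.exp (-(1/4) * x ^ 2)) atBot (nhds 0) := by
  have key : ∀ l : Filter ℝ, Tendsto (fun x : ℝ => x ^ 2) l atTop →
      Tendsto (fun x : ℝ => Real.exp (-(1/4) * x ^ 2)) l (nhds 0) := by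
    intro l hl
    have h2 : Tendsto (fun x : ℝ => -(1/4) * x ^ 2) l atBot := by
      apply Tendsto.const_mul_atTop_of_neg (by norm_num : (-(1/4):ℝ) < 0) hl
    exact Real.tendsto_exp_atBot.comp h2
  constructor
  · exact key _ (tendsto_pow_atTop two_ne_zero)
  · apply key
    have : Tendsto (fun x : ℝ => |x| ^ 2) atBot atTop :=
      (tendsto_pow_atTop two_ne_zero).comp tendsto_abs_atBot_atTop
    simpa [sq_abs] using this

lemma tendsto_pow_gauss_top (m : ℕ) :
    Tendsto (fun x : ℝ => x ^ m * Real.exp (-x ^ 2 / 2)) atTop (nhds 0) := by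
  apply squeeze_zero_norm (fun x => by simp only [norm_eq_abs]; exact aux_bound m x)
  simpa using (tendsto_sq_bound.1.const_mul (m.factorial * Real.exp 1))

lemma tendsto_pow_gauss_bot (m : ℕ) :
    Tendsto (fun x : ℝ => x ^ m * Real.exp (-x ^ 2 / 2)) atBot (nhds 0) := by
  apply squeeze_zero_norm (fun x => by simp only [norm_eq_abs]; exact aux_bound m x)
  simpa using (tendsto_sq_bound.2.const_mul (m.factorial * Real.exp 1))

lemma gauss_deriv (m : ℕ) (x : ℝ) :
    HasDerivAt (fun x : ℝ => -(x ^ (m+1) * Real.exp (-x ^ 2 / 2)))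
      (x ^ (m+2) * Real.exp (-x ^ 2 / 2) - (m+1) * (x ^ m * Real.exp (-x ^ 2 / 2))) x := by
  have h1 : HasDerivAt (fun x : ℝ => x ^ (m+1)) ((m+1) * x ^ m) x := by
    simpa using hasDerivAt_pow (m+1) x
  have h2 : HasDerivAt (fun x : ℝ => Real.exp (-x ^ 2 / 2)) (-x * Real.exp (-x ^ 2 / 2)) x := by
    have h3 : HasDerivAt (fun x : ℝ => -x ^ 2 / 2) (-x) x := by
      have := (hasDerivAt_pow 2 x).neg.div_const 2
      simpa using this.congr_deriv (by ring)
    simpa [mul_comm] using h3.exp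
  have := (h1.mul h2).neg
  apply this.congr_deriv
  ring

lemma gauss_rec (m : ℕ) :
    ∫ x : ℝ, x ^ (m+2) * Real.exp (-x ^ 2 / 2) =
      (m+1) * ∫ x : ℝ, x ^ m * Real.exp (-x ^ 2 / 2) := by
  have hint : Integrable (fun x : ℝ =>
      x ^ (m+2) * Real.exp (-x ^ 2 / 2) - (m+1) * (x ^ m * Real.exp (-x ^ 2 / 2))) :=
    (integrable_pow_gauss (m+2)).sub ((integrable_pow_gauss m).const_mul _)
  have h0 : Tendsto (fun x : ℝ => -(x ^ (m+1) * Real.exp (-x ^ 2 / 2))) atTop (nhds 0) := by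
    simpa using (tendsto_pow_gauss_top (m+1)).neg
  have h0' : Tendsto (fun x : ℝ => -(x ^ (m+1) * Real.exp (-x ^ 2 / 2))) atBot (nhds 0) := by
    simpa using (tendsto_pow_gauss_bot (m+1)).neg
  have key := integral_of_hasDerivAt_of_tendsto (gauss_deriv m) hint h0' h0
  rw [integral_sub (integrable_pow_gauss (m+2)) ((integrable_pow_gauss m).const_mul _)] at key
  rw [integral_const_mul] at key
  simp at key
  linarith [key]

lemma gauss_base : ∫ x : ℝ, Real.exp (-x ^ 2 / 2) = Real.sqrt (2 * Real.pi) := by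
  have := integral_gaussian (1/2)
  rw [show Real.pi / (1/2) = 2 * Real.pi by ring] at this
  rw [← this]
  congr 1 with x
  ring_nf

lemma gauss_J2 : ∫ x : ℝ, x ^ 2 * Real.exp (-x ^ 2 / 2) = Real.sqrt (2 * Real.pi) := by
  have := gauss_rec 0
  simpa [gauss_base] using this

lemma gauss_J4 : ∫ x : ℝ, x ^ 4 * Real.exp (-x ^ 2 / 2) = 3 * Real.sqrt (2 * Real.pi) := by
  have := gauss_rec 2
  rw [gauss_J2] at this
  rw [this]
  norm_num

lemma gauss_J1 : ∫ x : ℝ, x ^ 1 * Real.exp (-x ^ 2 / 2) = 0 := by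
  have hderiv : ∀ x : ℝ, HasDerivAt (fun x : ℝ => -Real.exp (-x ^ 2 / 2))
      (x ^ 1 * Real.exp (-x ^ 2 / 2)) x := by
    intro x
    have h3 : HasDerivAt (fun x : ℝ => -x ^ 2 / 2) (-x) x := by
      have := (hasDerivAt_pow 2 x).neg.div_const 2
      simpa using this.congr_deriv (by ring)
    have := h3.exp.neg
    apply this.congr_deriv
    ring
  have h0 : Tendsto (fun x : ℝ => -Real.exp (-x ^ 2 / 2)) atTop (nhds 0) := by
    simpa using (tendsto_pow_gauss_top 0).neg
  have h0' : Tendsto (fun x : ℝ => -Real.exp (-x ^ 2 / 2)) atBot (nhds 0) := by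
    simpa using (tendsto_pow_gauss_bot 0).neg
  have key := integral_of_hasDerivAt_of_tendsto hderiv (by simpa using integrable_pow_gauss 1) h0' h0
  simpa using key


lemma gaussianReal_eq_withDensity :
    gaussianReal 0 1 = volume.withDensity (fun x => ((Real.toNNReal (gaussianPDFReal 0 1 x) : ℝ≥0) : ℝ≥0∞)) := by
  rw [gaussianReal_of_var_ne_zero 0 one_ne_zero]
  rfl

lemma measurable_toNNReal_pdf : Measurable (fun x => Real.toNNReal (gaussianPDFReal 0 1 x)) :=
  (measurable_gaussianPDFReal 0 1).real_toNNReal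

lemma pdf_eq (x : ℝ) : gaussianPDFReal 0 1 x = (Real.sqrt (2 * Real.pi))⁻¹ * Real.exp (-x ^ 2 / 2) := by
  rw [gaussianPDFReal]
  norm_num

lemma integral_gaussianReal_eq (g : ℝ → ℝ) :
    ∫ x, g x ∂(gaussianReal 0 1)
      = (Real.sqrt (2 * Real.pi))⁻¹ * ∫ x, g x * Real.exp (-x ^ 2 / 2) := by
  rw [gaussianReal_eq_withDensity, integral_withDensity_eq_integral_smul measurable_toNNReal_pdf]
  rw [← integral_const_mul]
  congr 1 with x
  have h0 : 0 ≤ gaussianPDFReal 0 1 x := gaussianPDFReal_nonneg 0 1 x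
  simp only [NNReal.smul_def, smul_eq_mul]
  rw [Real.coe_toNNReal _ h0, pdf_eq]
  ring

lemma integrable_pow_gaussianReal (m : ℕ) :
    Integrable (fun x : ℝ => x ^ m) (gaussianReal 0 1) := by
  rw [gaussianReal_eq_withDensity,
    integrable_withDensity_iff_integrable_smul measurable_toNNReal_pdf]
  have : Integrable (fun x : ℝ => (Real.sqrt (2 * Real.pi))⁻¹ * (x ^ m * Real.exp (-x ^ 2 / 2))) :=
    (integrable_pow_gauss m).const_mul _
  apply this.congr
  filter_upwards with x
  have h0 : 0 ≤ gaussianPDFReal 0 1 x := gaussianPDFReal_nonneg 0 1 x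
  simp only [NNReal.smul_def, smul_eq_mul]
  rw [Real.coe_toNNReal _ h0, pdf_eq]
  ring

lemma gaussianReal_m0 : ∫ x, (1:ℝ) ∂(gaussianReal 0 1) = 1 := by simp

lemma gaussianReal_m1 : ∫ x, x ∂(gaussianReal 0 1) = 0 := by
  rw [integral_gaussianReal_eq]
  have h : ∫ x : ℝ, x * Real.exp (-x ^ 2 / 2) = 0 := by
    have := gauss_J1
    simpa using this
  rw [h, mul_zero]

lemma sqrt_two_pi_pos : 0 < Real.sqrt (2 * Real.pi) := Real.sqrt_pos.mpr (by positivity)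

lemma gaussianReal_m2 : ∫ x, x ^ 2 ∂(gaussianReal 0 1) = 1 := by
  rw [integral_gaussianReal_eq, gauss_J2, inv_mul_cancel₀ (ne_of_gt sqrt_two_pi_pos)]

lemma gaussianReal_m4 : ∫ x, x ^ 4 ∂(gaussianReal 0 1) = 3 := by
  rw [integral_gaussianReal_eq, gauss_J4]
  rw [← mul_assoc, mul_comm _ (3:ℝ), mul_assoc, inv_mul_cancel₀ (ne_of_gt sqrt_two_pi_pos), mul_one]




variable {q : ℕ}

instance : IsProbabilityMeasure (stdGaussian q) :=
  Measure.isProbabilityMeasure_map (Measurable.aemeasurable (MeasurableEquiv.measurable _))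

lemma integral_pi_gauss (f : Fin q → ℝ → ℝ) :
    ∫ y : Fin q → ℝ, ∏ i, f i (y i) ∂(Measure.pi fun _ : Fin q => gaussianReal 0 1)
      = ∏ i, ∫ x, f i x ∂(gaussianReal 0 1) := by
  letI : MeasureSpace ℝ := ⟨gaussianReal 0 1⟩
  haveI : SigmaFinite (volume : Measure ℝ) :=
    show SigmaFinite (gaussianReal 0 1) from inferInstance
  exact integral_fintype_prod_eq_prod f

lemma integrable_pi_gauss (f : Fin q → ℝ → ℝ) (hf : ∀ i, Integrable (f i) (gaussianReal 0 1)) :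
    Integrable (fun y : Fin q → ℝ => ∏ i, f i (y i))
      (Measure.pi fun _ : Fin q => gaussianReal 0 1) := by
  letI : MeasureSpace ℝ := ⟨gaussianReal 0 1⟩
  haveI : SigmaFinite (volume : Measure ℝ) :=
    show SigmaFinite (gaussianReal 0 1) from inferInstance
  exact Integrable.fintype_prod hf

lemma integral_stdGaussian (F : EuclideanSpace ℝ (Fin q) → ℝ) :
    ∫ z, F z ∂(stdGaussian q) = ∫ y : Fin q → ℝ,
      F (MeasurableEquiv.toLp 2 (Fin q → ℝ) y)
      ∂(Measure.pi fun _ : Fin q => gaussianReal 0 1) :=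
  integral_map_equiv _ F

lemma integrable_stdGaussian_iff (F : EuclideanSpace ℝ (Fin q) → ℝ) :
    Integrable F (stdGaussian q) ↔ Integrable
      (fun y : Fin q → ℝ => F (MeasurableEquiv.toLp 2 (Fin q → ℝ) y))
      (Measure.pi fun _ : Fin q => gaussianReal 0 1) :=
  integrable_map_equiv _ F

@[simp] lemma equiv_symm_apply (y : Fin q → ℝ) (i : Fin q) :
    (MeasurableEquiv.toLp 2 (Fin q → ℝ) y : EuclideanSpace ℝ (Fin q)) i = y i := rfl

lemma prod_eq_mul {j k : Fin q} (hjk : j ≠ k) (y : Fin q → ℝ) :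
    y j * y k = ∏ i, (if i = j ∨ i = k then y i else 1) := by
  rw [← Finset.prod_subset (Finset.subset_univ ({j, k} : Finset (Fin q)))]
  · rw [Finset.prod_pair hjk]
    simp [hjk]
  · intro i _ hi
    simp only [Finset.mem_insert, Finset.mem_singleton, not_or] at hi
    simp [hi.1, hi.2]

lemma prod_eq_sq (j : Fin q) (m : ℕ) (y : Fin q → ℝ) :
    y j ^ m = ∏ i, (if i = j then y i ^ m else 1) := by
  rw [Finset.prod_eq_single_of_mem j (Finset.mem_univ j) (fun i _ hij => if_neg hij), if_pos rfl]

lemma stdGaussian_mul (j k : Fin q) :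
    ∫ z, z j * z k ∂(stdGaussian q) = if j = k then 1 else 0 := by
  rw [integral_stdGaussian]
  simp only [equiv_symm_apply]
  by_cases hjk : j = k
  · subst hjk
    rw [if_pos rfl]
    rw [show (fun y : Fin q → ℝ => y j * y j) = fun y => ∏ i, (if i = j then y i ^ 2 else 1) by
      funext y; rw [← prod_eq_sq j 2 y]; ring]
    rw [integral_pi_gauss (f := fun i t => if i = j then t ^ 2 else 1)]
    apply Finset.prod_eq_one
    intro i _
    by_cases hij : i = j
    · simp [hij, gaussianReal_m2]
    · simp [hij]
  · rw [if_neg hjk]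
    rw [show (fun y : Fin q → ℝ => y j * y k) = fun y => ∏ i, (if i = j ∨ i = k then y i else 1)
      from funext fun y => prod_eq_mul hjk y]
    rw [integral_pi_gauss (f := fun i t => if i = j ∨ i = k then t else 1)]
    apply Finset.prod_eq_zero (Finset.mem_univ j)
    simp [gaussianReal_m1]

lemma integrable_coord_mul (j k : Fin q) :
    Integrable (fun z : EuclideanSpace ℝ (Fin q) => z j * z k) (stdGaussian q) := by
  rw [integrable_stdGaussian_iff]
  simp only [equiv_symm_apply]
  by_cases hjk : j = k
  · subst hjk
    rw [show (fun y : Fin q → ℝ => y j * y j) = fun y => ∏ i, (if i = j then y i ^ 2 else 1) by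
      funext y; rw [← prod_eq_sq j 2 y]; ring]
    apply integrable_pi_gauss (f := fun i t => if i = j then t ^ 2 else 1)
    intro i
    by_cases hij : i = j
    · simpa [hij] using integrable_pow_gaussianReal 2
    · simp only [hij, if_false]; exact integrable_const 1
  · rw [show (fun y : Fin q → ℝ => y j * y k) = fun y => ∏ i, (if i = j ∨ i = k then y i else 1)
      from funext fun y => prod_eq_mul hjk y]
    apply integrable_pi_gauss (f := fun i t => if i = j ∨ i = k then t else 1)
    intro i
    by_cases hij : i = j ∨ i = k
    · simpa [hij] using integrable_pow_gaussianReal 1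
    · simp only [hij, if_false]; exact integrable_const 1

lemma sq_sq_prod {i j : Fin q} (hij : i ≠ j) (y : Fin q → ℝ) :
    y i ^ 2 * y j ^ 2 = ∏ l, (if l = i ∨ l = j then y l ^ 2 else 1) := by
  rw [← Finset.prod_subset (Finset.subset_univ ({i, j} : Finset (Fin q)))]
  · rw [Finset.prod_pair hij]
    simp [hij]
  · intro l _ hl
    simp only [Finset.mem_insert, Finset.mem_singleton, not_or] at hl
    simp [hl.1, hl.2]

lemma stdGaussian_sq_sq (i j : Fin q) :
    ∫ z, z i ^ 2 * z j ^ 2 ∂(stdGaussian q) = if i = j then 3 else 1 := by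
  rw [integral_stdGaussian]
  simp only [equiv_symm_apply]
  by_cases hij : i = j
  · subst hij
    rw [if_pos rfl]
    rw [show (fun y : Fin q → ℝ => y i ^ 2 * y i ^ 2) = fun y => ∏ l, (if l = i then y l ^ 4 else 1) by
      funext y; rw [← prod_eq_sq i 4 y]; ring]
    rw [integral_pi_gauss (f := fun l t => if l = i then t ^ 4 else 1)]
    rw [Finset.prod_eq_single_of_mem i (Finset.mem_univ i) (fun l _ hl => by simp [hl])]
    simp [gaussianReal_m4]
  · rw [if_neg hij]
    rw [show (fun y : Fin q → ℝ => y i ^ 2 * y j ^ 2) = fun y => ∏ l, (if l = i ∨ l = j then y l ^ 2 else 1)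
      from funext fun y => sq_sq_prod hij y]
    rw [integral_pi_gauss (f := fun l t => if l = i ∨ l = j then t ^ 2 else 1)]
    apply Finset.prod_eq_one
    intro l _
    by_cases hl : l = i ∨ l = j
    · simp [hl, gaussianReal_m2]
    · simp [hl]

lemma integrable_sq_sq (i j : Fin q) :
    Integrable (fun z : EuclideanSpace ℝ (Fin q) => z i ^ 2 * z j ^ 2) (stdGaussian q) := by
  rw [integrable_stdGaussian_iff]
  simp only [equiv_symm_apply]
  by_cases hij : i = j
  · subst hij
    rw [show (fun y : Fin q → ℝ => y i ^ 2 * y i ^ 2) = fun y => ∏ l, (if l = i then y l ^ 4 else 1) by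
      funext y; rw [← prod_eq_sq i 4 y]; ring]
    apply integrable_pi_gauss (f := fun l t => if l = i then t ^ 4 else 1)
    intro l
    by_cases hl : l = i
    · simpa [hl] using integrable_pow_gaussianReal 4
    · simp only [hl, if_false]; exact integrable_const 1
  · rw [show (fun y : Fin q → ℝ => y i ^ 2 * y j ^ 2) = fun y => ∏ l, (if l = i ∨ l = j then y l ^ 2 else 1)
      from funext fun y => sq_sq_prod hij y]
    apply integrable_pi_gauss (f := fun l t => if l = i ∨ l = j then t ^ 2 else 1)
    intro l
    by_cases hl : l = i ∨ l = j
    · simpa [hl] using integrable_pow_gaussianReal 2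
    · simp only [hl, if_false]; exact integrable_const 1

lemma norm_pow_four (z : EuclideanSpace ℝ (Fin q)) :
    ‖z‖ ^ 4 = ∑ i, ∑ j, z i ^ 2 * z j ^ 2 := by
  have h : ‖z‖ ^ 2 = ∑ i, z i ^ 2 := by
    rw [EuclideanSpace.norm_eq, Real.sq_sqrt (by positivity)]
    simp [Real.norm_eq_abs, sq_abs]
  calc ‖z‖ ^ 4 = (‖z‖ ^ 2) ^ 2 := by ring
    _ = (∑ i, z i ^ 2) ^ 2 := by rw [h]
    _ = ∑ i, ∑ j, z i ^ 2 * z j ^ 2 := by rw [sq, Finset.sum_mul_sum]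

lemma norm_four_eq_sum : (fun z : EuclideanSpace ℝ (Fin q) => ‖z‖ ^ 4)
    = fun z => ∑ i, ∑ j, z i ^ 2 * z j ^ 2 := funext norm_pow_four

lemma integrable_norm_four :
    Integrable (fun z : EuclideanSpace ℝ (Fin q) => ‖z‖ ^ 4) (stdGaussian q) := by
  rw [norm_four_eq_sum]
  exact integrable_finset_sum _ fun i _ => integrable_finset_sum _ fun j _ => integrable_sq_sq i j

lemma stdGaussian_norm_four :
    ∫ z, ‖z‖ ^ 4 ∂(stdGaussian q) = (q : ℝ) ^ 2 + 2 * q := by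
  rw [norm_four_eq_sum,
    integral_finset_sum _ (fun i _ => integrable_finset_sum _ fun j _ => integrable_sq_sq i j)]
  have h1 : ∀ i : Fin q, ∫ z, ∑ j, z i ^ 2 * z j ^ 2 ∂(stdGaussian q) = (q : ℝ) + 2 := by
    intro i
    rw [integral_finset_sum _ (fun j _ => integrable_sq_sq i j)]
    have : ∀ j : Fin q, ∫ z, z i ^ 2 * z j ^ 2 ∂(stdGaussian q)
        = 1 + (if i = j then (2:ℝ) else 0) := by
      intro j
      rw [stdGaussian_sq_sq]
      by_cases hij : i = j <;> simp [hij] <;> norm_num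
    simp_rw [this]
    rw [Finset.sum_add_distrib, Finset.sum_ite_eq (Finset.univ : Finset (Fin q)) i fun _ => (2:ℝ)]
    simp
  simp_rw [h1]
  simp
  ring



variable {F : Type*} [NormedAddCommGroup F] [NormedSpace ℝ F]

lemma hess_lip {L : ℝ} (f : F → ℝ) (hf : ContDiff ℝ 3 f)
    (hhess : ∀ x u, ‖iteratedFDeriv ℝ 2 f (x + u) - iteratedFDeriv ℝ 2 f x‖ ≤ L * ‖u‖)
    (a b : F) : ‖fderiv ℝ (fderiv ℝ f) a - fderiv ℝ (fderiv ℝ f) b‖ ≤ L * ‖a - b‖ := by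
  have h2 : ∀ c : F, iteratedFDeriv ℝ 2 f c
      = (continuousMultilinearCurryRightEquiv' ℝ 1 F ℝ).symm
        (iteratedFDeriv ℝ 1 (fun y => fderiv ℝ f y) c) := fun c =>
    iteratedFDeriv_succ_eq_comp_right
  have h1 : ∀ c : F, iteratedFDeriv ℝ 1 (fun y => fderiv ℝ f y) c
      = (continuousMultilinearCurryFin1 ℝ F (F →L[ℝ] ℝ)).symm
        (fderiv ℝ (fun y => fderiv ℝ f y) c) := by
    intro c
    ext m
    rw [iteratedFDeriv_one_apply]
    simp
  have key := hhess b (a - b)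
  rw [add_sub_cancel] at key
  calc ‖fderiv ℝ (fderiv ℝ f) a - fderiv ℝ (fderiv ℝ f) b‖
      = ‖(continuousMultilinearCurryFin1 ℝ F (F →L[ℝ] ℝ)).symm
          (fderiv ℝ (fun y => fderiv ℝ f y) a)
        - (continuousMultilinearCurryFin1 ℝ F (F →L[ℝ] ℝ)).symm
          (fderiv ℝ (fun y => fderiv ℝ f y) b)‖ := by
        rw [← LinearIsometryEquiv.map_sub, LinearIsometryEquiv.norm_map]
    _ = ‖iteratedFDeriv ℝ 1 (fun y => fderiv ℝ f y) a
        - iteratedFDeriv ℝ 1 (fun y => fderiv ℝ f y) b‖ := by rw [h1, h1]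
    _ = ‖iteratedFDeriv ℝ 2 f a - iteratedFDeriv ℝ 2 f b‖ := by
        rw [h2, h2, ← LinearIsometryEquiv.map_sub, LinearIsometryEquiv.norm_map]
    _ ≤ L * ‖a - b‖ := key

lemma taylor_sym_bound {L : ℝ} (f : F → ℝ) (hf : ContDiff ℝ 3 f)
    (hhess : ∀ x u, ‖iteratedFDeriv ℝ 2 f (x + u) - iteratedFDeriv ℝ 2 f x‖ ≤ L * ‖u‖)
    (x u : F) :
    |f (x + u) - f (x - u) - 2 * (fderiv ℝ f x u)| ≤ L / 3 * ‖u‖ ^ 3 := by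
  have hfd : Differentiable ℝ f := hf.differentiable (by norm_num)
  have hGc : ContDiff ℝ 2 (fderiv ℝ f) := hf.fderiv_right (by norm_num)
  have hGd : Differentiable ℝ (fderiv ℝ f) := hGc.differentiable (by norm_num)
  have hcurve : ∀ (v : F) (t : ℝ), HasDerivAt (fun t : ℝ => x + t • v) v t := by
    intro v t
    simpa using ((hasDerivAt_id t).smul_const v).const_add x
  have hcurve2 : ∀ (v : F) (t : ℝ), HasDerivAt (fun t : ℝ => x - t • v) (-v) t := by
    intro v t
    simpa using ((hasDerivAt_id t).smul_const v).const_sub x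
  have hψderiv : ∀ t : ℝ, HasDerivAt
      (fun t : ℝ => fderiv ℝ f (x + t • u) + fderiv ℝ f (x - t • u) - (2:ℝ) • fderiv ℝ f x)
      (fderiv ℝ (fderiv ℝ f) (x + t • u) u - fderiv ℝ (fderiv ℝ f) (x - t • u) u) t := by
    intro t
    have h1 : HasDerivAt (fun t : ℝ => fderiv ℝ f (x + t • u))
        (fderiv ℝ (fderiv ℝ f) (x + t • u) u) t :=
      ((hGd _).hasFDerivAt).comp_hasDerivAt t (hcurve u t)
    have h2 : HasDerivAt (fun t : ℝ => fderiv ℝ f (x - t • u))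
        (-(fderiv ℝ (fderiv ℝ f) (x - t • u) u)) t := by
      have h := ((hGd _).hasFDerivAt).comp_hasDerivAt t (hcurve2 u t)
      rwa [map_neg] at h
    have h3 := (h1.add h2).sub_const ((2:ℝ) • fderiv ℝ f x)
    apply h3.congr_deriv
    simp [sub_eq_add_neg]
  have hψbound : ∀ t ∈ Icc (0:ℝ) 1,
      ‖fderiv ℝ f (x + t • u) + fderiv ℝ f (x - t • u) - (2:ℝ) • fderiv ℝ f x‖
        ≤ L * ‖u‖ ^ 2 * t ^ 2 := by
    have hB : ∀ s : ℝ, HasDerivAt (fun t : ℝ => L * ‖u‖ ^ 2 * t ^ 2) (L * ‖u‖ ^ 2 * (2 * s)) s := by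
      intro s
      have h := (hasDerivAt_pow 2 s).const_mul (L * ‖u‖ ^ 2)
      apply h.congr_deriv
      push_cast
      ring
    refine image_norm_le_of_norm_deriv_right_le_deriv_boundary
      (f' := fun t => fderiv ℝ (fderiv ℝ f) (x + t • u) u - fderiv ℝ (fderiv ℝ f) (x - t • u) u)
      ?_ ?_ (by simp [two_smul]) hB ?_
    · exact fun t _ => ((hψderiv t).continuousAt).continuousWithinAt
    · exact fun t _ => (hψderiv t).hasDerivWithinAt
    · intro s hs
      have hlip := hess_lip f hf hhess (x + s • u) (x - s • u)
      have heq : (x + s • u) - (x - s • u) = (2 * s) • u := by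
        rw [two_mul, add_smul]
        abel
      rw [heq] at hlip
      calc ‖fderiv ℝ (fderiv ℝ f) (x + s • u) u - fderiv ℝ (fderiv ℝ f) (x - s • u) u‖
          = ‖(fderiv ℝ (fderiv ℝ f) (x + s • u) - fderiv ℝ (fderiv ℝ f) (x - s • u)) u‖ := by
            rw [ContinuousLinearMap.sub_apply]
        _ ≤ ‖fderiv ℝ (fderiv ℝ f) (x + s • u) - fderiv ℝ (fderiv ℝ f) (x - s • u)‖ * ‖u‖ :=
            ContinuousLinearMap.le_opNorm _ u
        _ ≤ (L * ‖(2 * s) • u‖) * ‖u‖ :=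
            mul_le_mul_of_nonneg_right hlip (norm_nonneg u)
        _ = L * (|2 * s| * ‖u‖) * ‖u‖ := by rw [norm_smul, Real.norm_eq_abs]
        _ = L * ‖u‖ ^ 2 * |2 * s| := by ring
        _ = L * ‖u‖ ^ 2 * (2 * s) := by
            rw [abs_of_nonneg (by nlinarith [hs.1])]
  have hφderiv : ∀ t : ℝ, HasDerivAt
      (fun t : ℝ => f (x + t • u) - f (x - t • u) - (2 * fderiv ℝ f x u) * t)
      ((fderiv ℝ f (x + t • u) + fderiv ℝ f (x - t • u) - (2:ℝ) • fderiv ℝ f x) u) t := by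
    intro t
    have h1 : HasDerivAt (fun t : ℝ => f (x + t • u)) (fderiv ℝ f (x + t • u) u) t :=
      ((hfd _).hasFDerivAt).comp_hasDerivAt t (hcurve u t)
    have h2 : HasDerivAt (fun t : ℝ => f (x - t • u)) (-(fderiv ℝ f (x - t • u) u)) t := by
      have h := ((hfd _).hasFDerivAt).comp_hasDerivAt t (hcurve2 u t)
      rwa [map_neg] at h
    have h3 : HasDerivAt (fun t : ℝ => (2 * fderiv ℝ f x u) * t) (2 * fderiv ℝ f x u) t := by
      simpa using (hasDerivAt_id t).const_mul (2 * fderiv ℝ f x u)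
    have h4 := (h1.sub h2).sub h3
    apply h4.congr_deriv
    simp only [ContinuousLinearMap.sub_apply, ContinuousLinearMap.add_apply,
      ContinuousLinearMap.smul_apply, smul_eq_mul]
    ring
  have hφbound : ∀ t ∈ Icc (0:ℝ) 1,
      ‖f (x + t • u) - f (x - t • u) - (2 * fderiv ℝ f x u) * t‖ ≤ L / 3 * ‖u‖ ^ 3 * t ^ 3 := by
    have hB : ∀ s : ℝ, HasDerivAt (fun t : ℝ => L / 3 * ‖u‖ ^ 3 * t ^ 3) (L * ‖u‖ ^ 3 * s ^ 2) s := by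
      intro s
      have h := (hasDerivAt_pow 3 s).const_mul (L / 3 * ‖u‖ ^ 3)
      apply h.congr_deriv
      push_cast
      ring
    refine image_norm_le_of_norm_deriv_right_le_deriv_boundary
      (f' := fun t => (fderiv ℝ f (x + t • u) + fderiv ℝ f (x - t • u) - (2:ℝ) • fderiv ℝ f x) u)
      ?_ ?_ (by simp) hB ?_
    · exact fun t _ => ((hφderiv t).continuousAt).continuousWithinAt
    · exact fun t _ => (hφderiv t).hasDerivWithinAt
    · intro s hs
      calc ‖(fderiv ℝ f (x + s • u) + fderiv ℝ f (x - s • u) - (2:ℝ) • fderiv ℝ f x) u‖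
          ≤ ‖fderiv ℝ f (x + s • u) + fderiv ℝ f (x - s • u) - (2:ℝ) • fderiv ℝ f x‖ * ‖u‖ :=
            ContinuousLinearMap.le_opNorm _ u
        _ ≤ (L * ‖u‖ ^ 2 * s ^ 2) * ‖u‖ :=
            mul_le_mul_of_nonneg_right (hψbound s ⟨hs.1, le_of_lt hs.2⟩) (norm_nonneg u)
        _ = L * ‖u‖ ^ 3 * s ^ 2 := by ring
  have hfinal := hφbound 1 ⟨zero_le_one, le_refl 1⟩
  simp only [one_smul, mul_one, one_pow] at hfinal
  rw [Real.norm_eq_abs] at hfinal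
  calc |f (x + u) - f (x - u) - 2 * (fderiv ℝ f x u)|
      = |f (x + u) - f (x - u) - 2 * fderiv ℝ f x u| := rfl
    _ ≤ L / 3 * ‖u‖ ^ 3 := hfinal




section matrixfacts
variable {d q : ℕ} (P : Matrix (Fin d) (Fin q) ℝ)

lemma toEuc_apply (z : EuclideanSpace ℝ (Fin q)) (i : Fin d) :
    (Matrix.toEuclideanLin P z : EuclideanSpace ℝ (Fin d)) i = ∑ j, P i j * z j := by
  simp [Matrix.toEuclideanLin_apply, Matrix.mulVec, dotProduct]

lemma toEuc_adj (v : EuclideanSpace ℝ (Fin d)) (z : EuclideanSpace ℝ (Fin q)) :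
    ⟪v, Matrix.toEuclideanLin P z⟫_ℝ = ⟪Matrix.toEuclideanLin Pᵀ v, z⟫_ℝ := by
  simp only [PiLp.inner_apply, RCLike.inner_apply, conj_trivial, toEuc_apply,
    Matrix.transpose_apply]
  simp_rw [Finset.mul_sum, Finset.sum_mul]
  rw [Finset.sum_comm]
  apply Finset.sum_congr rfl
  intro j _
  apply Finset.sum_congr rfl
  intro i _
  ring

lemma toEuc_isometry (hP : Pᵀ * P = 1) (z : EuclideanSpace ℝ (Fin q)) :
    Matrix.toEuclideanLin Pᵀ (Matrix.toEuclideanLin P z) = z := by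
  ext j
  rw [toEuc_apply]
  have : ∀ i, (Matrix.toEuclideanLin P z : EuclideanSpace ℝ (Fin d)) i = ∑ k, P i k * z k :=
    toEuc_apply P z
  simp_rw [this, Matrix.transpose_apply, Finset.mul_sum]
  rw [Finset.sum_comm]
  have h1 : ∀ k, ∑ i, P i j * (P i k * z k) = (Pᵀ * P) j k * z k := by
    intro k
    rw [Matrix.mul_apply]
    rw [Finset.sum_mul]
    apply Finset.sum_congr rfl
    intro i _
    rw [Matrix.transpose_apply]
    ring
  simp_rw [h1, hP]
  simp [Matrix.one_apply]

lemma toEuc_norm (hP : Pᵀ * P = 1) (z : EuclideanSpace ℝ (Fin q)) :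
    ‖Matrix.toEuclideanLin P z‖ = ‖z‖ := by
  have h : ‖Matrix.toEuclideanLin P z‖ ^ 2 = ‖z‖ ^ 2 := by
    rw [← real_inner_self_eq_norm_sq, ← real_inner_self_eq_norm_sq]
    rw [toEuc_adj, toEuc_isometry P hP]
  rw [← Real.sqrt_sq (norm_nonneg (Matrix.toEuclideanLin P z)), ← Real.sqrt_sq (norm_nonneg z), h]

end matrixfacts

/-- unbiasedness and bias: if `f` is `C³` with `L`-Lipschitz Hessian,
`P ∈ ℝ^{d×q}` has `PᵀP = I`, `z ∼ N(0, I_q)` and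
`g_ε = ((f(x+εPz) − f(x−εPz))/(2ε)) Pz`, then `E[g_ε] = PPᵀ∇f(x) + b_ε` with
`‖b_ε‖ ≤ (L/6) ε² E‖Pz‖⁴ ≤ (L/6) ε² (q+4)²`. -/
theorem unbiasedness_and_bias (d q : ℕ) (L ε : ℝ) (hL : 0 < L) (hε : 0 < ε)
    (f : EuclideanSpace ℝ (Fin d) → ℝ) (hf : ContDiff ℝ 3 f)
    (hhess : ∀ x u, ‖iteratedFDeriv ℝ 2 f (x + u) - iteratedFDeriv ℝ 2 f x‖ ≤ L * ‖u‖)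
    (P : Matrix (Fin d) (Fin q) ℝ) (hP : Pᵀ * P = 1)
    (x : EuclideanSpace ℝ (Fin d)) :
    ∃ b : EuclideanSpace ℝ (Fin d),
      (∫ z, ((f (x + ε • Matrix.toEuclideanLin P z) - f (x - ε • Matrix.toEuclideanLin P z))
              / (2 * ε)) • Matrix.toEuclideanLin P z ∂(stdGaussian q))
          = Matrix.toEuclideanLin P (Matrix.toEuclideanLin Pᵀ (gradient f x)) + b
      ∧ ‖b‖ ≤ L / 6 * ε ^ 2 * ∫ z, ‖Matrix.toEuclideanLin P z‖ ^ 4 ∂(stdGaussian q)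
      ∧ (∫ z, ‖Matrix.toEuclideanLin P z‖ ^ 4 ∂(stdGaussian q)) ≤ ((q : ℝ) + 4) ^ 2
      ∧ ‖b‖ ≤ L / 6 * ε ^ 2 * ((q : ℝ) + 4) ^ 2 := by
  classical
  set v : EuclideanSpace ℝ (Fin d) := gradient f x with hv
  set A : EuclideanSpace ℝ (Fin q) → EuclideanSpace ℝ (Fin d) :=
    fun z => Matrix.toEuclideanLin P z with hA
  have hAcont : Continuous A := (Matrix.toEuclideanLin P).continuous_of_finiteDimensional
  have hfd : Differentiable ℝ f := hf.differentiable (by norm_num)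
  have hgrad : ∀ u, fderiv ℝ f x u = ⟪v, u⟫_ℝ := by
    intro u
    have h := (hfd x).hasGradientAt
    rw [hasGradientAt_iff_hasFDerivAt] at h
    rw [h.fderiv]
    rfl
  set T : EuclideanSpace ℝ (Fin q) → EuclideanSpace ℝ (Fin d) :=
    fun z => (⟪v, A z⟫_ℝ) • A z with hT
  set h : EuclideanSpace ℝ (Fin q) → EuclideanSpace ℝ (Fin d) :=
    fun z => ((f (x + ε • A z) - f (x - ε • A z) - 2 * ε * ⟪v, A z⟫_ℝ) / (2 * ε)) • A z with hh
  -- decomposition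
  have hdecomp : ∀ z, ((f (x + ε • A z) - f (x - ε • A z)) / (2 * ε)) • A z = T z + h z := by
    intro z
    rw [hT, hh, ← add_smul]
    congr 1
    field_simp
    ring
  -- pointwise bound on h
  have hbound : ∀ z, ‖h z‖ ≤ L / 6 * ε ^ 2 * ‖z‖ ^ 4 := by
    intro z
    have htay := taylor_sym_bound f hf hhess x (ε • A z)
    have hnorm : ‖ε • A z‖ = ε * ‖z‖ := by
      rw [norm_smul, Real.norm_eq_abs, abs_of_pos hε, toEuc_norm P hP]
    have hfd2 : fderiv ℝ f x (ε • A z) = ε * ⟪v, A z⟫_ℝ := by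
      rw [hgrad, real_inner_smul_right]
    rw [hnorm, hfd2] at htay
    have h2 : |f (x + ε • A z) - f (x - ε • A z) - 2 * ε * ⟪v, A z⟫_ℝ|
        ≤ L / 3 * ε ^ 3 * ‖z‖ ^ 3 := by
      calc |f (x + ε • A z) - f (x - ε • A z) - 2 * ε * ⟪v, A z⟫_ℝ|
          = |f (x + ε • A z) - f (x - ε • A z) - 2 * (ε * ⟪v, A z⟫_ℝ)| := by ring_nf
        _ ≤ L / 3 * (ε * ‖z‖) ^ 3 := htay
        _ = L / 3 * ε ^ 3 * ‖z‖ ^ 3 := by ring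
    rw [hh]
    rw [norm_smul, Real.norm_eq_abs, abs_div, abs_of_pos (by linarith : (0:ℝ) < 2 * ε),
      toEuc_norm P hP]
    calc |f (x + ε • A z) - f (x - ε • A z) - 2 * ε * ⟪v, A z⟫_ℝ| / (2 * ε) * ‖z‖
        ≤ (L / 3 * ε ^ 3 * ‖z‖ ^ 3) / (2 * ε) * ‖z‖ := by
          apply mul_le_mul_of_nonneg_right _ (norm_nonneg z)
          exact div_le_div_of_nonneg_right h2 (by linarith) |>.trans_eq rfl
        _ = L / 6 * ε ^ 2 * ‖z‖ ^ 4 := by field_simp; ring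
  -- integrability
  have hT_int : Integrable T (stdGaussian q) := by
    apply Integrable.mono' ((integrable_const (1:ℝ) |>.add integrable_norm_four).const_mul ‖v‖)
    · exact ((continuous_const.inner (𝕜 := ℝ) hAcont).smul hAcont).aestronglyMeasurable
    · apply ae_of_all
      intro z
      rw [hT]
      calc ‖(⟪v, A z⟫_ℝ) • A z‖ = |⟪v, A z⟫_ℝ| * ‖A z‖ := by
            rw [norm_smul, Real.norm_eq_abs]
        _ ≤ (‖v‖ * ‖A z‖) * ‖A z‖ :=
            mul_le_mul_of_nonneg_right (abs_real_inner_le_norm v (A z)) (norm_nonneg _)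
        _ = ‖v‖ * ‖z‖ ^ 2 := by rw [toEuc_norm P hP]; ring
        _ ≤ ‖v‖ * (1 + ‖z‖ ^ 4) := by
            apply mul_le_mul_of_nonneg_left _ (norm_nonneg v)
            nlinarith [sq_nonneg (‖z‖ ^ 2 - 1), norm_nonneg z]
  have hh_int : Integrable h (stdGaussian q) := by
    apply Integrable.mono' (integrable_norm_four.const_mul (L / 6 * ε ^ 2))
    · apply Continuous.aestronglyMeasurable
      refine Continuous.fun_smul ?_ hAcont
      apply Continuous.div_const
      have hc1 : Continuous fun z => f (x + ε • A z) :=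
        hf.continuous.comp (continuous_const.add (hAcont.const_smul ε))
      have hc2 : Continuous fun z => f (x - ε • A z) :=
        hf.continuous.comp (continuous_const.sub (hAcont.const_smul ε))
      exact (hc1.sub hc2).sub (continuous_const.mul (continuous_const.inner (𝕜 := ℝ) hAcont))
    · exact ae_of_all _ hbound
  -- split the integral
  have hsplit : (∫ z, ((f (x + ε • A z) - f (x - ε • A z)) / (2 * ε)) • A z ∂(stdGaussian q))
      = (∫ z, T z ∂(stdGaussian q)) + ∫ z, h z ∂(stdGaussian q) := by
    rw [← integral_add hT_int hh_int]
    apply integral_congr_ae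
    exact ae_of_all _ hdecomp
  -- compute ∫ T
  have hTval : (∫ z, T z ∂(stdGaussian q)) = Matrix.toEuclideanLin P (Matrix.toEuclideanLin Pᵀ v) := by
    set w : EuclideanSpace ℝ (Fin q) := Matrix.toEuclideanLin Pᵀ v with hw
    ext i
    have hproj := (ContinuousLinearMap.integral_comp_comm (EuclideanSpace.proj i) hT_int).symm
    have hTz : ∀ z : EuclideanSpace ℝ (Fin q),
        EuclideanSpace.proj i (T z) = ∑ k, ∑ j, (w k * P i j) * (z k * z j) := by
      intro z
      have : EuclideanSpace.proj i (T z) = (⟪v, A z⟫_ℝ) * (A z) i := by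
        rw [hT]
        simp [PiLp.smul_apply, smul_eq_mul]
      rw [this, toEuc_adj, ← hw]
      rw [show (A z) i = ∑ j, P i j * z j from toEuc_apply P z i]
      rw [PiLp.inner_apply]
      simp only [RCLike.inner_apply, conj_trivial]
      rw [Finset.sum_mul]
      apply Finset.sum_congr rfl
      intro k _
      rw [Finset.mul_sum]
      apply Finset.sum_congr rfl
      intro j _
      ring
    have : EuclideanSpace.proj i (∫ z, T z ∂(stdGaussian q))
        = ∑ k, ∑ j, (w k * P i j) * (if k = j then (1:ℝ) else 0) := by
      rw [hproj]
      rw [show (fun z => EuclideanSpace.proj i (T z))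
          = fun z : EuclideanSpace ℝ (Fin q) => ∑ k, ∑ j, (w k * P i j) * (z k * z j)
        from funext hTz]
      rw [integral_finset_sum _ (fun k _ => integrable_finset_sum _
        (fun j _ => (integrable_coord_mul k j).const_mul _))]
      apply Finset.sum_congr rfl
      intro k _
      rw [integral_finset_sum _ (fun j _ => (integrable_coord_mul k j).const_mul _)]
      apply Finset.sum_congr rfl
      intro j _
      rw [integral_const_mul, stdGaussian_mul]
    have hL2 : (∫ z, T z ∂(stdGaussian q)) i
        = ∑ k, ∑ j, (w k * P i j) * (if k = j then (1:ℝ) else 0) := this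
    rw [hL2]
    rw [toEuc_apply]
    simp only [mul_ite, mul_one, mul_zero]
    rw [Finset.sum_comm]
    apply Finset.sum_congr rfl
    intro j _
    rw [Finset.sum_ite_eq' Finset.univ j (fun k => w k * P i j)]
    simp [mul_comm]
  refine ⟨∫ z, h z ∂(stdGaussian q), ?_, ?_, ?_, ?_⟩
  · rw [hsplit, hTval]
  · have h1 : ‖∫ z, h z ∂(stdGaussian q)‖ ≤ ∫ z, ‖h z‖ ∂(stdGaussian q) :=
      norm_integral_le_integral_norm _
    have h2 : ∫ z, ‖h z‖ ∂(stdGaussian q) ≤ ∫ z, L / 6 * ε ^ 2 * ‖z‖ ^ 4 ∂(stdGaussian q) :=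
      integral_mono hh_int.norm (integrable_norm_four.const_mul _) hbound
    have h3 : (∫ z, L / 6 * ε ^ 2 * ‖z‖ ^ 4 ∂(stdGaussian q))
        = L / 6 * ε ^ 2 * ∫ z, ‖z‖ ^ 4 ∂(stdGaussian q) := integral_const_mul _ _
    have h4 : (∫ z, ‖Matrix.toEuclideanLin P z‖ ^ 4 ∂(stdGaussian q))
        = ∫ z, ‖z‖ ^ 4 ∂(stdGaussian q) := by
      apply integral_congr_ae
      exact ae_of_all _ fun z => by simp only [toEuc_norm P hP]
    rw [h4]
    calc ‖∫ z, h z ∂(stdGaussian q)‖ ≤ ∫ z, L / 6 * ε ^ 2 * ‖z‖ ^ 4 ∂(stdGaussian q) :=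
          le_trans h1 h2
      _ = L / 6 * ε ^ 2 * ∫ z, ‖z‖ ^ 4 ∂(stdGaussian q) := h3
  · have h4 : (∫ z, ‖Matrix.toEuclideanLin P z‖ ^ 4 ∂(stdGaussian q))
        = ∫ z, ‖z‖ ^ 4 ∂(stdGaussian q) := by
      apply integral_congr_ae
      exact ae_of_all _ fun z => by simp only [toEuc_norm P hP]
    rw [h4, stdGaussian_norm_four]
    have : (0:ℝ) ≤ q := Nat.cast_nonneg q
    nlinarith
  · have h1 : ‖∫ z, h z ∂(stdGaussian q)‖ ≤ ∫ z, ‖h z‖ ∂(stdGaussian q) :=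
      norm_integral_le_integral_norm _
    have h2 : ∫ z, ‖h z‖ ∂(stdGaussian q) ≤ ∫ z, L / 6 * ε ^ 2 * ‖z‖ ^ 4 ∂(stdGaussian q) :=
      integral_mono hh_int.norm (integrable_norm_four.const_mul _) hbound
    have h3 : (∫ z, L / 6 * ε ^ 2 * ‖z‖ ^ 4 ∂(stdGaussian q))
        = L / 6 * ε ^ 2 * ∫ z, ‖z‖ ^ 4 ∂(stdGaussian q) := integral_const_mul _ _
    have h5 : (∫ z, ‖z‖ ^ 4 ∂(stdGaussian q)) ≤ ((q:ℝ) + 4) ^ 2 := by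
      rw [stdGaussian_norm_four]
      have : (0:ℝ) ≤ q := Nat.cast_nonneg q
      nlinarith
    calc ‖∫ z, h z ∂(stdGaussian q)‖ ≤ L / 6 * ε ^ 2 * ∫ z, ‖z‖ ^ 4 ∂(stdGaussian q) := by
          rw [← h3]; exact le_trans h1 h2
      _ ≤ L / 6 * ε ^ 2 * ((q:ℝ) + 4) ^ 2 := by
          apply mul_le_mul_of_nonneg_left h5 (by positivity)
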